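/- arXiv:1710.02958 — 4 statements merged into one kernel-verified Lean document; each statement's English description precedes it below -/
import Mathlib

section
/- A function f : 2^A → 2^A is a closure if and only if f is an extensive pseudo-closure. -/
section

variable {α : Type*} [SemilatticeSup α]

def IsPseudoClosure (f : α → α) : Prop :=
  ∀ x y, f (x ⊔ y) = f (f x ⊔ f y)

theorem ClosureOperator.isPseudoClosure (c : ClosureOperator α) : IsPseudoClosure c :=
  fun x y => (c.closure_sup_closure x y).symm

namespace IsPseudoClosure

variable {f : α → α}

theorem map_map (hf : IsPseudoClosure f) (x : α) : f (f x) = f x := by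
  simpa only [sup_idem] using (hf x x).symm

theorem monotone (hf : IsPseudoClosure f) (hext : ∀ x, x ≤ f x) : Monotone f := by
  intro x y hxy
  calc f x ≤ f x ⊔ f y := le_sup_left
    _ ≤ f (f x ⊔ f y) := hext _
    _ = f y := by rw [← hf, sup_eq_right.mpr hxy]

end IsPseudoClosure

end

theorem closure_iff_extensive_pseudo_closure {A : Type*} (f : Set A → Set A) :
    ((∀ X : Set A, X ⊆ f X) ∧ (∀ X Y : Set A, X ⊆ Y → f X ⊆ f Y) ∧
      (∀ X : Set A, f (f X) = f X)) ↔
    ((∀ X : Set A, X ⊆ f X) ∧ (∀ X Y : Set A, f (X ∪ Y) = f (f X ∪ f Y))) := by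
  constructor
  · rintro ⟨hext, hmono, hidem⟩
    exact ⟨hext, (ClosureOperator.mk' f hmono hext fun X => (hidem X).le).isPseudoClosure⟩
  · rintro ⟨hext, hpseudo⟩
    exact ⟨hext, IsPseudoClosure.monotone hpseudo hext, IsPseudoClosure.map_map hpseudo⟩
end

section
/- Let cl : 2^A → 2^A be a closure, and let ∅ ≠ X' ⊆ X ⊆ A. Then the function f defined by f(Y) := cl(Y ∪ X) \ X' is a pseudo-closure, i.e., f(Y ∪ Z) = f(f(Y) ∪ f(Z)) for all Y, Z ⊆ A. -/
/-! Since `X' ⊆ X ⊆ cl (Y ∪ X)`, removing `X'` and adding `X` back gives the closed set again: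
`f Y ∪ f Z ∪ X = cl (Y ∪ X) ∪ cl (Z ∪ X)`, whose closure is `cl (Y ∪ Z ∪ X)`. -/

theorem ClosureOperator.closure_sdiff_sup_closure_sdiff_sup {α : Type*}
    [GeneralizedCoheytingAlgebra α] (c : ClosureOperator α) {x x' : α} (hx : x' ≤ x)
    (y z : α) :
    c (c (y ⊔ x) \ x' ⊔ c (z ⊔ x) \ x' ⊔ x) = c (y ⊔ z ⊔ x) := by
  have hle : x ≤ c (y ⊔ x) ⊔ c (z ⊔ x) :=
    le_sup_of_le_left (le_sup_right.trans (c.le_closure _))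
  calc c (c (y ⊔ x) \ x' ⊔ c (z ⊔ x) \ x' ⊔ x)
      = c (c (y ⊔ x) ⊔ c (z ⊔ x)) := by rw [← sup_sdiff, sup_comm, sup_sdiff_cancel' hx hle]
    _ = c (y ⊔ z ⊔ x) := by rw [c.closure_sup_closure, ← sup_sup_distrib_right]

theorem pseudo_closure_of_closure_diff_general {A : Type*} (cl : Set A → Set A)
    (hext : ∀ X : Set A, X ⊆ cl X)
    (hinc : ∀ X Y : Set A, X ⊆ Y → cl X ⊆ cl Y)
    (hidem : ∀ X : Set A, cl (cl X) = cl X)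
    (X X' : Set A) (hsub : X' ⊆ X) :
    ∀ Y Z : Set A,
      (fun Y => cl (Y ∪ X) \ X') (Y ∪ Z) =
      (fun Y => cl (Y ∪ X) \ X')
        ((fun Y => cl (Y ∪ X) \ X') Y ∪ (fun Y => cl (Y ∪ X) \ X') Z) := by
  intro Y Z
  let c := ClosureOperator.mk' cl hinc hext fun X => (hidem X).le
  exact congrArg (· \ X') (c.closure_sdiff_sup_closure_sdiff_sup hsub Y Z).symm

theorem pseudo_closure_of_closure_diff {A : Type*} (cl : Set A → Set A)
    (hext : ∀ X : Set A, X ⊆ cl X)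
    (hinc : ∀ X Y : Set A, X ⊆ Y → cl X ⊆ cl Y)
    (hidem : ∀ X : Set A, cl (cl X) = cl X)
    (X X' : Set A) (hX' : X'.Nonempty) (hsub : X' ⊆ X) :
    ∀ Y Z : Set A,
      (fun Y => cl (Y ∪ X) \ X') (Y ∪ Z) =
      (fun Y => cl (Y ∪ X) \ X')
        ((fun Y => cl (Y ∪ X) \ X') Y ∪ (fun Y => cl (Y ∪ X) \ X') Z) :=
  pseudo_closure_of_closure_diff_general cl hext hinc hidem X X' hsub
end

section
/- Let cl be a closure on a finite set A with cl(∅) = ∅. If X ⊆ A is a minimum generator of A (i.e., cl(X) = A and no strictly smaller set generates A) and X is nonempty, then for any w ∈ X, the set X \ {w} is a minimum generator of cl(X \ {w}). -/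
/-!
If `cl Y = cl (X \ {w})`, then `insert w Y` generates everything `X` does, hence all of `A`.
Minimality of `X` gives `|X| ≤ |insert w Y| ≤ |Y| + 1`, i.e. `|X \ {w}| ≤ |Y|`.
-/

open Set

section

variable {A : Type*} {cl : Set A → Set A}

theorem subset_cl_insert_of_cl_eq_cl_sdiff (hext : ∀ X : Set A, X ⊆ cl X)
    (hinc : ∀ X Y : Set A, X ⊆ Y → cl X ⊆ cl Y) {X Y : Set A} {w : A}
    (hY : cl Y = cl (X \ {w})) : X ⊆ cl (insert w Y) := by
  intro x hx
  by_cases hxw : x = w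
  · exact hext _ (hxw ▸ mem_insert x Y)
  · have hxY : x ∈ cl Y := hY ▸ hext _ ⟨hx, hxw⟩
    exact hinc _ _ (subset_insert w Y) hxY

theorem cl_eq_univ_of_subset_cl (hinc : ∀ X Y : Set A, X ⊆ Y → cl X ⊆ cl Y)
    (hidem : ∀ X : Set A, cl (cl X) = cl X) {X Z : Set A} (hgen : cl X = univ)
    (hXZ : X ⊆ cl Z) : cl Z = univ := by
  rw [eq_univ_iff_forall]
  intro a
  rw [← hidem Z]
  exact hinc _ _ hXZ (hgen ▸ mem_univ a)

end

theorem minimum_generator_remove_general {A : Type*} (cl : Set A → Set A)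
    (hext : ∀ X : Set A, X ⊆ cl X)
    (hinc : ∀ X Y : Set A, X ⊆ Y → cl X ⊆ cl Y)
    (hidem : ∀ X : Set A, cl (cl X) = cl X)
    (X : Set A) (hgen : cl X = Set.univ)
    (hmin : ∀ Y : Set A, cl Y = Set.univ → X.ncard ≤ Y.ncard)
    (w : A) (hw : w ∈ X) :
    ∀ Y : Set A, cl Y = cl (X \ {w}) → (X \ {w}).ncard ≤ Y.ncard := by
  intro Y hY
  have hgenY : cl (insert w Y) = univ :=
    cl_eq_univ_of_subset_cl hinc hidem hgen (subset_cl_insert_of_cl_eq_cl_sdiff hext hinc hY)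
  have hXY : X.ncard ≤ Y.ncard + 1 := (hmin _ hgenY).trans (ncard_insert_le w Y)
  rw [ncard_sdiff_singleton_of_mem hw]
  omega

theorem minimum_generator_remove {A : Type*} [Fintype A] (cl : Set A → Set A)
    (hext : ∀ X : Set A, X ⊆ cl X)
    (hinc : ∀ X Y : Set A, X ⊆ Y → cl X ⊆ cl Y)
    (hidem : ∀ X : Set A, cl (cl X) = cl X)
    (hempty : cl ∅ = ∅)
    (X : Set A) (hgen : cl X = Set.univ)
    (hmin : ∀ Y : Set A, cl Y = Set.univ → X.ncard ≤ Y.ncard)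
    (hne : X.Nonempty) (w : A) (hw : w ∈ X) :
    ∀ Y : Set A, cl Y = cl (X \ {w}) → (X \ {w}).ncard ≤ Y.ncard :=
  minimum_generator_remove_general cl hext hinc hidem X hgen hmin w hw
end

section
/- If v is a vertex of a connected graph G (with at least 2 vertices) such that G − v is connected and isometric in G, then v belongs to every isometric-hull set of G. In particular, every vertex of degree 1 belongs to every isometric-hull set of G. -/
def SimpleGraph.Subgraph.IsIsometric {V : Type*} {G : SimpleGraph V} (H : G.Subgraph) : Prop :=
  ∀ x y : H.verts, H.coe.dist x y = G.dist (x : V) (y : V)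

/-- `S` is an isometric-hull set of `G` if no proper isometric subgraph of `G`
contains `S`. -/
def IsIsometricHullSet {V : Type*} (G : SimpleGraph V) (S : Set V) : Prop :=
  ∀ H : G.Subgraph, H.IsIsometric → S ⊆ H.verts → H = ⊤

/-!
If `G - v` is isometric and `S` avoids `v`, then `G - v` is an isometric subgraph containing `S`,
so it would have to be all of `G`, which it is not. A leaf `v` of a connected graph lies on no path
between two other vertices, so every geodesic of `G` between vertices of `G - v` is a walk of
`G - v`; hence `G - v` is isometric.
-/

namespace SimpleGraph

variable {V W : Type*} {G : SimpleGraph V}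

theorem Reachable.dist_map_le {G' : SimpleGraph W} (f : G →g G') {u v : V}
    (h : G.Reachable u v) : G'.dist (f u) (f v) ≤ G.dist u v := by
  obtain ⟨p, hp⟩ := h.exists_walk_length_eq_dist
  simpa [hp] using dist_le (p.map f)

namespace Subgraph

theorem isInduced_deleteVerts_top (s : Set V) : ((⊤ : G.Subgraph).deleteVerts s).IsInduced :=
  fun _ hv _ hw h ↦ deleteVerts_adj.2 ⟨trivial, hv.2, trivial, hw.2, h⟩

variable {H : G.Subgraph}

theorem IsInduced.exists_walk_coe (hH : H.IsInduced) {x y : V} (p : G.Walk x y)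
    (hp : ∀ z ∈ p.support, z ∈ H.verts) :
    ∃ q : H.coe.Walk ⟨x, hp x p.start_mem_support⟩ ⟨y, hp y p.end_mem_support⟩,
      q.length = p.length := by
  refine ⟨(p.induce H.verts hp).map ⟨id, fun h ↦ hH.adj.2 h⟩, ?_⟩
  have hsupp := congrArg List.length (p.support_induce hp)
  simp only [Walk.length_support, List.length_attachWith, Nat.add_right_cancel_iff] at hsupp
  simpa using hsupp

theorem IsInduced.dist_coe_eq_of_geodesic (hH : H.IsInduced) {x y : V} (p : G.Walk x y)
    (hp : ∀ z ∈ p.support, z ∈ H.verts) (hlen : p.length = G.dist x y) :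
    H.coe.dist ⟨x, hp x p.start_mem_support⟩ ⟨y, hp y p.end_mem_support⟩ = G.dist x y := by
  obtain ⟨q, hq⟩ := hH.exists_walk_coe p hp
  refine le_antisymm ((dist_le q).trans (hq.trans hlen).le) ?_
  exact q.reachable.dist_map_le H.hom

end Subgraph

section Leaf

variable {v : V} [Fintype (G.neighborSet v)]

theorem Walk.IsPath.support_subset_deleteVerts_of_degree_eq_one {x y : V} {p : G.Walk x y}
    (hp : p.IsPath) (hdeg : G.degree v = 1) (hx : x ≠ v) (hy : y ≠ v) :
    ∀ z ∈ p.support, z ∈ ((⊤ : G.Subgraph).deleteVerts {v}).verts := by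
  have hleaf : (G.neighborSet v).Subsingleton := by
    obtain ⟨u, -, hu⟩ := degree_eq_one_iff_existsUnique_adj.mp hdeg
    exact fun a ha b hb ↦ (hu a ha).trans (hu b hb).symm
  rintro z hz
  refine ⟨trivial, fun hzv ↦ ?_⟩
  rw [Set.mem_singleton_iff.mp hzv] at hz
  exact hp.isTrail.not_mem_support_of_subsingleton_neighborSet hx.symm hy.symm hleaf hz

theorem Connected.exists_geodesic_in_deleteVerts_of_degree_eq_one (hconn : G.Connected)
    (hdeg : G.degree v = 1) {x y : V}
    (hx : x ∈ ((⊤ : G.Subgraph).deleteVerts {v}).verts)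
    (hy : y ∈ ((⊤ : G.Subgraph).deleteVerts {v}).verts) :
    ∃ p : G.Walk x y, (∀ z ∈ p.support, z ∈ ((⊤ : G.Subgraph).deleteVerts {v}).verts) ∧
      p.length = G.dist x y := by
  obtain ⟨p, hp, hlen⟩ := hconn.exists_path_of_dist x y
  exact ⟨p, hp.support_subset_deleteVerts_of_degree_eq_one hdeg
    (fun h ↦ hx.2 (h ▸ rfl)) (fun h ↦ hy.2 (h ▸ rfl)), hlen⟩

theorem Connected.isIsometric_deleteVerts_of_degree_eq_one (hconn : G.Connected)
    (hdeg : G.degree v = 1) :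
    ((⊤ : G.Subgraph).deleteVerts {v}).IsIsometric := by
  rintro ⟨x, hx⟩ ⟨y, hy⟩
  obtain ⟨p, hp, hlen⟩ := hconn.exists_geodesic_in_deleteVerts_of_degree_eq_one hdeg hx hy
  exact (Subgraph.isInduced_deleteVerts_top _).dist_coe_eq_of_geodesic p hp hlen

end Leaf

end SimpleGraph

theorem IsIsometricHullSet.mem_of_isIsometric_deleteVerts {V : Type*} {G : SimpleGraph V}
    {S : Set V} (hS : IsIsometricHullSet G S) {v : V}
    (hiso : ((⊤ : G.Subgraph).deleteVerts {v}).IsIsometric) : v ∈ S := by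
  by_contra hv
  have htop := hS _ hiso fun s hs ↦ ⟨trivial, fun h ↦ hv (h ▸ hs)⟩
  have hmem : v ∈ ((⊤ : G.Subgraph).deleteVerts {v}).verts := by rw [htop]; trivial
  exact hmem.2 rfl

theorem mem_every_isometric_hull_set_general {V : Type*} [Fintype V]
    (G : SimpleGraph V) [DecidableRel G.Adj] (hconn : G.Connected) :
    (∀ v : V,
      ((⊤ : G.Subgraph).deleteVerts {v}).coe.Connected →
      ((⊤ : G.Subgraph).deleteVerts {v}).IsIsometric →
      ∀ S : Set V, IsIsometricHullSet G S → v ∈ S) ∧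
    (∀ v : V, G.degree v = 1 → ∀ S : Set V, IsIsometricHullSet G S → v ∈ S) := by
  refine ⟨fun v _ hiso S hS ↦ hS.mem_of_isIsometric_deleteVerts hiso, fun v hdeg S hS ↦ ?_⟩
  exact hS.mem_of_isIsometric_deleteVerts (hconn.isIsometric_deleteVerts_of_degree_eq_one hdeg)

theorem mem_every_isometric_hull_set {V : Type*} [Fintype V] [DecidableEq V]
    (G : SimpleGraph V) [DecidableRel G.Adj] (hconn : G.Connected)
    (hcard : 2 ≤ Fintype.card V) :
    (∀ v : V,
      ((⊤ : G.Subgraph).deleteVerts {v}).coe.Connected →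
      ((⊤ : G.Subgraph).deleteVerts {v}).IsIsometric →
      ∀ S : Set V, IsIsometricHullSet G S → v ∈ S) ∧
    (∀ v : V, G.degree v = 1 → ∀ S : Set V, IsIsometricHullSet G S → v ∈ S) :=
  mem_every_isometric_hull_set_general G hconn
end
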